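/- arXiv:2505.16468 — 4 statements merged into one kernel-verified Lean document; each statement's English description precedes it below -/
import Mathlib

section
/- Explicit test-function lower bound on the reference tetrahedron, curl case (inequality (4.7) in the proof of Lemma 4.1): For every integer r ≥ 1 there exists a constant C > 0, depending only on r, such that for every q ∈ P_{r−1}(K̂)³, the function v = Σ_{i=1}^{3} (n_i·q) b_i^{curl} satisfies ∫_{K̂} v·q dx ≥ C ∫_{K̂} |q|² dx. Equivalently, ∫_{K̂} [λ₂λ₃λ₀ (q·n₁)² + λ₃λ₀λ₁ (q·n₂)² + λ₀λ₁λ₂ (q·n₃)²] dx ≥ C ∫_{K̂} |q|² dx. -/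
open MeasureTheory Finset

noncomputable section

/-- Points of `ℝ³`. -/
abbrev V3 := Fin 3 → ℝ

/-- Euclidean dot product on `ℝ³`. -/
def dot3 (a b : V3) : ℝ := ∑ i, a i * b i

/-- Euclidean norm on `ℝ³`. -/
def norm3 (a : V3) : ℝ := Real.sqrt (∑ i, (a i) ^ 2)

/-- `L²` norm (w.r.t. Lebesgue measure, Euclidean pointwise norm) of a vector
field over a set `K ⊆ ℝ³`. -/
def L2norm (K : Set V3) (f : V3 → V3) : ℝ :=
  Real.sqrt (∫ x in K, ∑ i, (f x i) ^ 2)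

/-- Vertices of the reference tetrahedron: `v̂₀ = 0`, `v̂ⱼ = eⱼ` for `j = 1,2,3`. -/
def refVert (j : Fin 4) : V3 := fun i => if (i : ℕ) + 1 = (j : ℕ) then 1 else 0

/-- The reference tetrahedron `K̂`, the convex hull of `0, e₁, e₂, e₃`. -/
def refTet : Set V3 := convexHull ℝ (Set.range refVert)

/-- Barycentric coordinate functions of the reference tetrahedron. -/
def refLambda (j : Fin 4) (x : V3) : ℝ :=
  if (j : ℕ) = 0 then 1 - ∑ i, x i else dot3 (refVert j) x

/-- Gradient of the `j`-th reference barycentric coordinate. -/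
def refGrad (j : Fin 4) : V3 := if (j : ℕ) = 0 then (fun _ => -1) else refVert j

/-- Unit outward normal to the face `F̂ⱼ = {x ∈ K̂ : λ̂ⱼ(x) = 0}` of the reference
tetrahedron: the negatively oriented normalized gradient of `λ̂ⱼ`. -/
def refNormal (j : Fin 4) : V3 := (norm3 (refGrad j))⁻¹ • (-(refGrad j))

/-- Unit tangent vector of the edge from vertex `0` to vertex `i` (`i = 1,2,3`)
of the reference tetrahedron. -/
def refTangent (i : Fin 3) : V3 :=
  (norm3 (refVert i.succ - refVert 0))⁻¹ • (refVert i.succ - refVert 0)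

/-- The `H(curl)` bubble functions `bᵢ^curl = (∏_{k ≠ i} λ̂ₖ) n̂ᵢ`, `i = 1,2,3`, on
the reference tetrahedron (indexing: `i : Fin 3` stands for the index `i+1`). -/
def refBubbleCurl (i : Fin 3) (x : V3) : V3 :=
  (∏ k ∈ Finset.univ.erase i.succ, refLambda k x) • refNormal i.succ

/-- The `H(div)` bubble functions `bᵢ^div = λ̂₀ λ̂ᵢ t₀ᵢ`, `i = 1,2,3`, on the
reference tetrahedron. -/
def refBubbleDiv (i : Fin 3) (x : V3) : V3 :=
  (refLambda 0 x * refLambda i.succ x) • refTangent i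

end

/-!
Since `nᵢ = -eᵢ`, the integrand is `∑ᵢ (∏_{k ≠ i} λₖ) qᵢ²`, and as `0 ≤ λⱼ ≤ 1` on `K̂` it
dominates `b |q|²` with `b = λ₀λ₁λ₂λ₃`. The weight `b` is positive in the interior of `K̂` and a
polynomial vanishing on an open set is zero, so `q ↦ ∫ b |q|²` is positive definite on the
finite-dimensional space `P_{r-1}(K̂)³`. Both `∫ b |q|²` and `∫ |q|²` are continuous and
quadratically homogeneous in the coordinates of `q`, so comparing them on the unit sphere of
the coordinate space gives the constant.
-/

open MvPolynomial

attribute [local fun_prop] MvPolynomial.continuous_eval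

theorem exists_pos_mul_le_of_homogeneous {E : Type*} [NormedAddCommGroup E]
    [NormedSpace ℝ E] [FiniteDimensional ℝ E] {F G : E → ℝ} (hF : Continuous F)
    (hG : Continuous G) (hF_smul : ∀ (t : ℝ) v, F (t • v) = t ^ 2 * F v)
    (hG_smul : ∀ (t : ℝ) v, G (t • v) = t ^ 2 * G v) (hG_pos : ∀ v ≠ 0, 0 < G v) :
    ∃ C > 0, ∀ v, C * F v ≤ G v := by
  have hS := isCompact_sphere (0 : E) 1
  obtain ⟨m, hm, hGm⟩ := hS.exists_forall_le' hG.continuousOn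
    fun u hu => hG_pos u (ne_zero_of_mem_unit_sphere ⟨u, hu⟩)
  obtain ⟨M, hFM⟩ := hS.exists_bound_of_continuousOn hF.continuousOn
  have hM : 0 < |M| + 1 := by positivity
  refine ⟨m / (|M| + 1), div_pos hm hM, fun v => ?_⟩
  obtain rfl | hv := eq_or_ne v 0
  · have hF0 : F 0 = 0 := by simpa using hF_smul 0 0
    have hG0 : G 0 = 0 := by simpa using hG_smul 0 0
    simp [hF0, hG0]
  set u := ‖v‖⁻¹ • v
  have hu : u ∈ Metric.sphere (0 : E) 1 := by simp [u, norm_smul, hv]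
  have hvu : v = ‖v‖ • u := by simp [u, smul_smul, hv]
  have hFu : m / (|M| + 1) * F u ≤ G u := calc
    m / (|M| + 1) * F u ≤ m / (|M| + 1) * (|M| + 1) := by
      gcongr
      exact (le_abs_self _).trans <| (hFM u hu).trans <|
        (le_abs_self M).trans (le_add_of_nonneg_right zero_le_one)
    _ = m := div_mul_cancel₀ m hM.ne'
    _ ≤ G u := hGm u hu
  rw [hvu, hF_smul, hG_smul, mul_left_comm]
  exact mul_le_mul_of_nonneg_left hFu (sq_nonneg _)

theorem MvPolynomial.eq_zero_of_eqOn_zero_of_isOpen {σ : Type*} [Fintype σ]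
    {p : MvPolynomial σ ℝ} {U : Set (σ → ℝ)} (hU : IsOpen U) (hUne : U.Nonempty)
    (hp : Set.EqOn (fun x => eval x p) 0 U) : p = 0 := by
  obtain ⟨x₀, hx₀⟩ := hUne
  have hp_zero :=
    (AnalyticOnNhd.eval_mvPolynomial p).eqOn_zero_of_preconnected_of_eventuallyEq_zero
      isPreconnected_univ (Set.mem_univ x₀) (Filter.eventuallyEq_of_mem (hU.mem_nhds hx₀) hp)
  exact MvPolynomial.funext fun x => by simpa using hp_zero (Set.mem_univ x)

theorem setIntegral_pos_of_continuous_of_isOpen {X : Type*} [TopologicalSpace X]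
    [T2Space X] [MeasurableSpace X] [OpensMeasurableSpace X] {μ : Measure X}
    [μ.IsOpenPosMeasure] [IsFiniteMeasureOnCompacts μ] {f : X → ℝ} (hf : Continuous f)
    {K U : Set X} (hK : IsCompact K) (hf_nonneg : ∀ x ∈ K, 0 ≤ f x) (hU : IsOpen U)
    (hUK : U ⊆ K) {x₀ : X} (hx₀ : x₀ ∈ U) (hfx₀ : f x₀ ≠ 0) : 0 < ∫ x in K, f x ∂μ := by
  rw [setIntegral_pos_iff_support_of_nonneg_ae
    (ae_restrict_of_forall_mem hK.measurableSet hf_nonneg)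
    (hf.continuousOn.integrableOn_compact hK)]
  exact ((hf.isOpen_support.inter hU).measure_pos μ ⟨x₀, hfx₀, hx₀⟩).trans_le
    (measure_mono (Set.inter_subset_inter_right _ hUK))

section WeightedNorm

variable {σ ι : Type*} [Fintype σ] [Fintype ι] {K U : Set (σ → ℝ)} {w : (σ → ℝ) → ℝ}

theorem setIntegral_weight_mul_sum_sq_pos (hK : IsCompact K) (hU : IsOpen U)
    (hUne : U.Nonempty) (hUK : U ⊆ K) (hw : Continuous w) (hwK : ∀ x ∈ K, 0 ≤ w x)
    (hwU : ∀ x ∈ U, 0 < w x) {q : ι → MvPolynomial σ ℝ} (hq : q ≠ 0) :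
    0 < ∫ x in K, w x * ∑ i, (eval x (q i)) ^ 2 := by
  obtain ⟨i, hi⟩ := Function.ne_iff.1 hq
  obtain ⟨x₀, hx₀, hqx₀⟩ : ∃ x ∈ U, eval x (q i) ≠ 0 := by
    by_contra! h
    exact hi (eq_zero_of_eqOn_zero_of_isOpen hU hUne h)
  refine setIntegral_pos_of_continuous_of_isOpen (by fun_prop) hK
    (fun x hx => mul_nonneg (hwK x hx) (Finset.sum_nonneg fun j _ => sq_nonneg _)) hU hUK hx₀
    (mul_pos (hwU x₀ hx₀) ?_).ne'
  exact Finset.sum_pos' (fun j _ => sq_nonneg _) ⟨i, Finset.mem_univ i, sq_pos_of_ne_zero hqx₀⟩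

theorem exists_pos_mul_setIntegral_sum_sq_le (hK : IsCompact K) (hU : IsOpen U)
    (hUne : U.Nonempty) (hUK : U ⊆ K) (hw : Continuous w) (hwK : ∀ x ∈ K, 0 ≤ w x)
    (hwU : ∀ x ∈ U, 0 < w x) (d : ℕ) :
    ∃ C > 0, ∀ q : ι → MvPolynomial σ ℝ, (∀ i, (q i).totalDegree ≤ d) →
      C * ∫ x in K, ∑ i, (eval x (q i)) ^ 2 ≤ ∫ x in K, w x * ∑ i, (eval x (q i)) ^ 2 := by
  let B := Module.finBasis ℝ (ι → restrictTotalDegree σ ℝ d)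
  let poly (c : Fin (Module.finrank ℝ (ι → restrictTotalDegree σ ℝ d)) → ℝ) (i : ι) :
      MvPolynomial σ ℝ := B.equivFun.symm c i
  have hpoly_eval : ∀ c x i, eval x (poly c i) = ∑ k, c k * eval x (B k i) := by
    simp [poly, Module.Basis.equivFun_symm_apply, smul_eval]
  have hpoly_smul : ∀ (t : ℝ) c, poly (t • c) = t • poly c := by
    intro t c; ext1 i; simp only [poly, map_smul, Pi.smul_apply, Submodule.coe_smul]
  have hpoly_inj : ∀ c, poly c = 0 → c = 0 := by
    intro c hc
    refine B.equivFun.symm.map_eq_zero_iff.1 (funext fun i => Subtype.ext ?_)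
    exact congrFun hc i
  have hcont : ∀ v : (σ → ℝ) → ℝ, Continuous v → Continuous fun c =>
      ∫ x in K, v x * ∑ i, (eval x (poly c i)) ^ 2 := by
    intro v hv
    refine continuous_parametric_integral_of_continuous ?_ hK
    simp only [hpoly_eval]
    fun_prop
  have hsmul : ∀ (v : (σ → ℝ) → ℝ) (t : ℝ) c,
      ∫ x in K, v x * ∑ i, (eval x (poly (t • c) i)) ^ 2 =
        t ^ 2 * ∫ x in K, v x * ∑ i, (eval x (poly c i)) ^ 2 := by
    intro v t c
    simp only [hpoly_smul, Pi.smul_apply, smul_eval, mul_pow, ← Finset.mul_sum,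
      ← integral_const_mul]
    congr 1; ext x; ring
  obtain ⟨C, hC, hCle⟩ := exists_pos_mul_le_of_homogeneous (hcont 1 continuous_const)
    (hcont w hw) (hsmul 1) (hsmul w) fun c hc =>
      setIntegral_weight_mul_sum_sq_pos hK hU hUne hUK hw hwK hwU (mt (hpoly_inj c) hc)
  refine ⟨C, hC, fun q hq => ?_⟩
  obtain ⟨c, rfl⟩ : ∃ c, poly c = q :=
    ⟨B.equivFun fun i => ⟨q i, (mem_restrictTotalDegree _ _ _).2 (hq i)⟩, by
      ext1 i; simp only [poly, LinearEquiv.symm_apply_apply]⟩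
  simpa using hCle c

end WeightedNorm

@[fun_prop]
theorem continuous_refLambda (j : Fin 4) : Continuous (refLambda j) := by
  unfold refLambda dot3
  split_ifs <;> fun_prop

theorem refVert_zero : refVert 0 = 0 := by
  funext i; simp [refVert]

theorem refVert_succ (i : Fin 3) : refVert i.succ = Pi.single i 1 := by
  funext k; simp [refVert, Pi.single_apply, Fin.ext_iff]

theorem refLambda_zero (x : V3) : refLambda 0 x = 1 - ∑ i, x i := rfl

theorem refLambda_succ (i : Fin 3) (x : V3) : refLambda i.succ x = x i := by
  simp [refLambda, dot3, refVert_succ, Pi.single_apply]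

theorem sum_refLambda (x : V3) : ∑ j, refLambda j x = 1 := by
  simp [Fin.sum_univ_succ, refLambda_zero, refLambda_succ]

theorem sum_refLambda_smul_refVert (x : V3) : ∑ j, refLambda j x • refVert j = x := by
  ext i
  rw [Fin.sum_univ_succ]
  simp [refVert_zero, refVert_succ, refLambda_succ, Pi.single_apply]

theorem refLambda_add_smul {a b : ℝ} (hab : a + b = 1) (j : Fin 4) (x y : V3) :
    refLambda j (a • x + b • y) = a * refLambda j x + b * refLambda j y := by
  cases j using Fin.cases with
  | zero =>
    simp only [refLambda_zero, Pi.add_apply, Pi.smul_apply, smul_eq_mul, Finset.sum_add_distrib,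
      ← Finset.mul_sum]
    linear_combination -hab
  | succ i => simp [refLambda_succ]

theorem refLambda_refVert_nonneg (j k : Fin 4) : 0 ≤ refLambda j (refVert k) := by
  fin_cases j <;> fin_cases k <;> simp only [refLambda, dot3, refVert, Fin.sum_univ_three] <;>
    norm_num

theorem convex_setOf_refLambda_nonneg : Convex ℝ {x : V3 | ∀ j, 0 ≤ refLambda j x} := by
  intro x hx y hy a b ha hb hab j
  simp only [Set.mem_ofPred_eq, refLambda_add_smul hab] at hx hy ⊢
  exact add_nonneg (mul_nonneg ha (hx j)) (mul_nonneg hb (hy j))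

theorem refTet_subset_setOf_refLambda_nonneg : refTet ⊆ {x | ∀ j, 0 ≤ refLambda j x} :=
  convexHull_min (Set.range_subset_iff.2 fun k j => refLambda_refVert_nonneg j k)
    convex_setOf_refLambda_nonneg

theorem refLambda_le_one {x : V3} (hx : ∀ j, 0 ≤ refLambda j x) (j : Fin 4) :
    refLambda j x ≤ 1 :=
  sum_refLambda x ▸ Finset.single_le_sum (fun k _ => hx k) (Finset.mem_univ j)

theorem setOf_refLambda_pos_subset_refTet : {x | ∀ j, 0 < refLambda j x} ⊆ refTet := by
  intro x hx
  rw [← sum_refLambda_smul_refVert x, ← Finset.centerMass_eq_of_sum_1 _ _ (sum_refLambda x)]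
  exact Finset.centerMass_mem_convexHull _ (fun j _ => (hx j).le) (by rw [sum_refLambda]; norm_num)
    fun j _ => Set.mem_range_self j

theorem isOpen_setOf_refLambda_pos : IsOpen {x | ∀ j, 0 < refLambda j x} := by
  simp only [Set.ofPred_forall]
  exact isOpen_iInter_of_finite fun j => isOpen_lt continuous_const (continuous_refLambda j)

theorem setOf_refLambda_pos_nonempty : {x | ∀ j, 0 < refLambda j x}.Nonempty := by
  refine ⟨fun _ => 1 / 8, fun j => ?_⟩
  fin_cases j <;> simp only [refLambda, dot3, refVert, Fin.sum_univ_three] <;> norm_num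

theorem isCompact_refTet : IsCompact refTet :=
  (Set.finite_range refVert).isCompact_convexHull (𝕜 := ℝ)

theorem refNormal_succ (i : Fin 3) : refNormal i.succ = -Pi.single i 1 := by
  simp [refNormal, refGrad, refVert_succ, norm3, Pi.single_apply]

theorem dot3_sum_smul_refBubbleCurl (a x : V3) :
    dot3 (∑ i, dot3 (refNormal i.succ) a • refBubbleCurl i x) a =
      ∑ i, (∏ k ∈ Finset.univ.erase i.succ, refLambda k x) * a i ^ 2 := by
  simp [dot3, refBubbleCurl, refNormal_succ, Finset.sum_apply, Pi.single_apply, sq, mul_assoc,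
    mul_comm]

theorem prod_refLambda_le_prod_erase {x : V3} (hx : ∀ j, 0 ≤ refLambda j x) (j : Fin 4) :
    ∏ k, refLambda k x ≤ ∏ k ∈ Finset.univ.erase j, refLambda k x := by
  rw [← Finset.mul_prod_erase _ _ (Finset.mem_univ j)]
  exact mul_le_of_le_one_left (Finset.prod_nonneg fun k _ => hx k) (refLambda_le_one hx j)

/-- **Explicit test-function lower bound on the reference tetrahedron, curl
case** (inequality (4.7) in the proof of Lemma 4.1): for every `r ≥ 1` there is
`C > 0`, depending only on `r`, such that for every `q ∈ P_{r-1}(K̂)³`, the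
function `v = ∑ᵢ (nᵢ·q) bᵢ^curl` satisfies `∫_{K̂} v·q ≥ C ∫_{K̂} |q|²`. -/
theorem ref_curl_test_lower_bound :
    ∀ r : ℕ, 1 ≤ r → ∃ C : ℝ, 0 < C ∧
      ∀ q : Fin 3 → MvPolynomial (Fin 3) ℝ, (∀ i, (q i).totalDegree ≤ r - 1) →
        C * ∫ x in refTet, ∑ i, (MvPolynomial.eval x (q i)) ^ 2 ≤
          ∫ x in refTet,
            dot3 (∑ i, dot3 (refNormal i.succ) (fun j => MvPolynomial.eval x (q j)) •
                refBubbleCurl i x)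
              (fun j => MvPolynomial.eval x (q j)) := by
  intro r _
  obtain ⟨C, hC, hCle⟩ := exists_pos_mul_setIntegral_sum_sq_le (ι := Fin 3) isCompact_refTet
    isOpen_setOf_refLambda_pos setOf_refLambda_pos_nonempty setOf_refLambda_pos_subset_refTet
    (w := fun x => ∏ j, refLambda j x) (by fun_prop)
    (fun x hx => Finset.prod_nonneg fun j _ => refTet_subset_setOf_refLambda_nonneg hx j)
    (fun x hx => Finset.prod_pos fun j _ => hx j) (r - 1)
  refine ⟨C, hC, fun q hq => (hCle q hq).trans ?_⟩
  simp_rw [dot3_sum_smul_refBubbleCurl]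
  refine setIntegral_mono_on ?_ ?_ isCompact_refTet.measurableSet fun x hx => ?_
  · exact (Continuous.continuousOn (by fun_prop)).integrableOn_compact isCompact_refTet
  · exact (Continuous.continuousOn (by fun_prop)).integrableOn_compact isCompact_refTet
  rw [Finset.mul_sum]
  exact Finset.sum_le_sum fun i _ => mul_le_mul_of_nonneg_right
    (prod_refLambda_le_prod_erase (refTet_subset_setOf_refLambda_nonneg hx) i.succ) (sq_nonneg _)
end

section
/- Abstract inf-sup correction lemma (the functional-analytic core of Theorem 4.1): Let H be a real inner product space, and let B and D be finite-dimensional subspaces of H. Assume there is a constant c > 0 such that for every q ∈ D, sup{⟨v, q⟩ : v ∈ B, ‖v‖ ≤ 1} ≥ c‖q‖. Then for every f ∈ H there exists m ∈ B such that ⟨m, q⟩ = ⟨f, q⟩ for all q ∈ D, and ‖m‖ ≤ (1/c)‖f‖. -/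
/-!
Let `P` be the orthogonal projection onto `B`. For `v ∈ B` we have `⟪v, q⟫ = ⟪v, P q⟫`, so the
inf-sup condition says `c ‖q‖ ≤ ‖P q‖` on `D`. Hence `p ↦ P_D (P p)` is injective on `D`
(as `⟪P p, p⟫ = ‖P p‖²`), so bijective, and `m := P p` with `P_D (P p) = P_D f` has the required
moments. Testing against `p` itself gives `‖m‖² = ⟪f, p⟫ ≤ ‖f‖ ‖p‖ ≤ ‖f‖ ‖m‖ / c`.
-/

namespace Submodule

theorem inner_starProjection_eq_of_mem_right {𝕜 E : Type*} [RCLike 𝕜] [NormedAddCommGroup E]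
    [InnerProductSpace 𝕜 E] (K : Submodule 𝕜 E) [K.HasOrthogonalProjection] (x : E) {u : E}
    (hu : u ∈ K) : inner 𝕜 (K.starProjection x) u = inner 𝕜 x u := by
  rw [inner_starProjection_left_eq_right, K.starProjection_eq_self_iff.mpr hu]

variable {H : Type*} [NormedAddCommGroup H] [InnerProductSpace ℝ H]

theorem real_inner_starProjection_self (K : Submodule ℝ H) [K.HasOrthogonalProjection] (x : H) :
    inner ℝ (K.starProjection x) x = ‖K.starProjection x‖ ^ 2 := by
  rw [real_inner_comm, ← K.inner_starProjection_eq_of_mem_right x (K.starProjection_apply_mem x),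
    real_inner_self_eq_norm_sq]

theorem sSup_inner_unitBall_le_norm_starProjection (K : Submodule ℝ H)
    [K.HasOrthogonalProjection] (q : H) :
    sSup {r : ℝ | ∃ v ∈ K, ‖v‖ ≤ 1 ∧ r = inner ℝ v q} ≤ ‖K.starProjection q‖ := by
  refine csSup_le ⟨0, 0, K.zero_mem, by simp⟩ ?_
  rintro r ⟨v, hv, hv1, rfl⟩
  calc inner ℝ v q = inner ℝ v (K.starProjection q) := by
        rw [real_inner_comm, ← K.inner_starProjection_eq_of_mem_right q hv, real_inner_comm]
    _ ≤ ‖v‖ * ‖K.starProjection q‖ := real_inner_le_norm _ _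
    _ ≤ ‖K.starProjection q‖ := mul_le_of_le_one_left (norm_nonneg _) hv1

theorem exists_mem_inner_starProjection_eq (B D : Submodule ℝ H) [B.HasOrthogonalProjection]
    [FiniteDimensional ℝ D] (hBD : D ⊓ Bᗮ = ⊥) (f : H) :
    ∃ p ∈ D, ∀ q ∈ D, inner ℝ (B.starProjection p) q = inner ℝ f q := by
  let T : D →ₗ[ℝ] D :=
    D.orthogonalProjectionOnto.toLinearMap ∘ₗ B.starProjection.toLinearMap ∘ₗ D.subtype
  have hT : ∀ (p : D) (q : D), inner ℝ (T p : H) q = inner ℝ (B.starProjection p) q :=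
    fun p q ↦ inner_orthogonalProjectionOnto_eq_of_mem_right q _
  have hT_inj : Function.Injective T := by
    rw [← LinearMap.ker_eq_bot, LinearMap.ker_eq_bot']
    intro p hp
    have hnorm : ‖B.starProjection p‖ ^ 2 = 0 := by
      rw [← real_inner_starProjection_self, ← hT p p, hp, ZeroMemClass.coe_zero, inner_zero_left]
    have hpB : (p : H) ∈ Bᗮ := B.starProjection_apply_eq_zero_iff.mp (by simpa using hnorm)
    exact Subtype.ext ((Submodule.eq_bot_iff _).mp hBD p ⟨p.2, hpB⟩)
  obtain ⟨p, hp⟩ := LinearMap.injective_iff_surjective.mp hT_inj (D.orthogonalProjectionOnto f)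
  refine ⟨p, p.2, fun q hq ↦ ?_⟩
  rw [← hT p ⟨q, hq⟩, hp]
  exact inner_orthogonalProjectionOnto_eq_of_mem_right ⟨q, hq⟩ f

theorem norm_starProjection_le_of_inner_eq (B : Submodule ℝ H) [B.HasOrthogonalProjection]
    {c : ℝ} (hc : 0 < c) {p f : H} (hpf : inner ℝ (B.starProjection p) p = inner ℝ f p)
    (hp : c * ‖p‖ ≤ ‖B.starProjection p‖) :
    ‖B.starProjection p‖ ≤ 1 / c * ‖f‖ := by
  set m := B.starProjection p
  have hm_sq : ‖m‖ ^ 2 ≤ ‖f‖ * ‖p‖ := by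
    rw [← real_inner_starProjection_self, hpf]
    exact real_inner_le_norm f p
  rcases (norm_nonneg m).eq_or_lt with hm0 | hm0
  · rw [← hm0]
    positivity
  rw [one_div_mul_eq_div, le_div_iff₀ hc]
  refine le_of_mul_le_mul_left ?_ hm0
  calc ‖m‖ * (‖m‖ * c) = c * ‖m‖ ^ 2 := by ring
    _ ≤ c * (‖f‖ * ‖p‖) := by gcongr
    _ = ‖f‖ * (c * ‖p‖) := by ring
    _ ≤ ‖f‖ * ‖m‖ := by gcongr
    _ = ‖m‖ * ‖f‖ := mul_comm _ _

end Submodule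

/-- **Abstract inf-sup correction lemma** (the functional-analytic core of
Theorem 4.1): let `H` be a real inner product space and `B`, `D`
finite-dimensional subspaces. If there is `c > 0` such that for every `q ∈ D`
we have `sup {⟪v, q⟫ : v ∈ B, ‖v‖ ≤ 1} ≥ c ‖q‖`, then for every `f ∈ H` there
is `m ∈ B` with `⟪m, q⟫ = ⟪f, q⟫` for all `q ∈ D` and `‖m‖ ≤ (1/c) ‖f‖`. -/
theorem abstract_inf_sup_correction
    {H : Type*} [NormedAddCommGroup H] [InnerProductSpace ℝ H]
    (B D : Submodule ℝ H) [FiniteDimensional ℝ B] [FiniteDimensional ℝ D]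
    (c : ℝ) (hc : 0 < c)
    (hinfsup : ∀ q ∈ D,
      c * ‖q‖ ≤ sSup {r : ℝ | ∃ v ∈ B, ‖v‖ ≤ 1 ∧ r = (inner ℝ v q : ℝ)}) :
    ∀ f : H, ∃ m ∈ B, (∀ q ∈ D, (inner ℝ m q : ℝ) = (inner ℝ f q : ℝ)) ∧
      ‖m‖ ≤ (1 / c) * ‖f‖ := by
  intro f
  have hcoercive : ∀ q ∈ D, c * ‖q‖ ≤ ‖B.starProjection q‖ := fun q hq ↦
    (hinfsup q hq).trans (B.sSup_inner_unitBall_le_norm_starProjection q)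
  have hBD : D ⊓ Bᗮ = ⊥ := by
    refine (Submodule.eq_bot_iff _).mpr fun p ⟨hpD, hpB⟩ ↦ ?_
    have := hcoercive p hpD
    rw [B.starProjection_apply_eq_zero_iff.mpr hpB, norm_zero] at this
    exact norm_le_zero_iff.mp (nonpos_of_mul_nonpos_right this hc)
  obtain ⟨p, hpD, hp⟩ := B.exists_mem_inner_starProjection_eq D hBD f
  exact ⟨B.starProjection p, B.starProjection_apply_mem p, hp,
    B.norm_starProjection_le_of_inner_eq hc (hp p hpD) (hcoercive p hpD)⟩
end

section
/- Symmetrization identity for the H(curl) advection operator (identity (5.2), curl case): Let u, β : ℝ³ → ℝ³ be differentiable at a point x ∈ ℝ³. Then (L^{curl}_β u)(x) + ((L^{curl}_β)^* u)(x) = (Dβ(x) + Dβ(x)ᵀ) u(x) − (div β)(x) u(x); that is, ∇(β·u)(x) + (curl u)(x) × β(x) − β(x) (div u)(x) + curl(β × u)(x) = (Dβ(x) + Dβ(x)ᵀ − (div β)(x) I) u(x). -/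
open Finset

noncomputable section

/-- Cross product on `ℝ³`. -/
def cross3 (a b : V3) : V3 :=
  ![a 1 * b 2 - a 2 * b 1, a 2 * b 0 - a 0 * b 2, a 0 * b 1 - a 1 * b 0]

/-- The `j`-th standard basis vector of `ℝ³`. -/
def e3 (j : Fin 3) : V3 := Pi.single j 1

/-- Partial derivative `∂ⱼ wᵢ (x)` of a vector field `w : ℝ³ → ℝ³`. -/
def pd (w : V3 → V3) (x : V3) (i j : Fin 3) : ℝ := fderiv ℝ w x (e3 j) i

/-- Divergence `div w = ∂₁w₁ + ∂₂w₂ + ∂₃w₃` of a vector field at a point. -/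
def divg (w : V3 → V3) (x : V3) : ℝ := ∑ i, pd w x i i

/-- Curl `(∂₂w₃ − ∂₃w₂, ∂₃w₁ − ∂₁w₃, ∂₁w₂ − ∂₂w₁)` of a vector field at a point
(0-based indices). -/
def curl3 (w : V3 → V3) (x : V3) : V3 :=
  ![pd w x 2 1 - pd w x 1 2, pd w x 0 2 - pd w x 2 0, pd w x 1 0 - pd w x 0 1]

/-- Gradient `∇f = (∂₁f, ∂₂f, ∂₃f)` of a scalar function at a point. -/
def grad3 (f : V3 → ℝ) (x : V3) : V3 := fun j => fderiv ℝ f x (e3 j)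

/-- Jacobian matrix `Dw(x)` with entries `(Dw)ᵢⱼ = ∂ⱼwᵢ`. -/
def jac (w : V3 → V3) (x : V3) : Matrix (Fin 3) (Fin 3) ℝ :=
  Matrix.of fun i j => pd w x i j

/-- The `H(curl)` advection operator `L^curl_β u = ∇(β·u) + (curl u) × β`. -/
def Lcurl (β u : V3 → V3) (x : V3) : V3 :=
  grad3 (fun y => dot3 (β y) (u y)) x + cross3 (curl3 u x) (β x)

/-- Formal adjoint `(L^curl_β)^* u = −β (div u) + curl(β × u)`. -/
def LcurlAdj (β u : V3 → V3) (x : V3) : V3 :=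
  -(divg u x • β x) + curl3 (fun y => cross3 (β y) (u y)) x

/-- The `H(div)` advection operator `L^div_β u = β (div u) − curl(β × u)`. -/
def Ldiv (β u : V3 → V3) (x : V3) : V3 :=
  divg u x • β x - curl3 (fun y => cross3 (β y) (u y)) x

/-- Formal adjoint `(L^div_β)^* u = −∇(β·u) − (curl u) × β`. -/
def LdivAdj (β u : V3 → V3) (x : V3) : V3 :=
  -grad3 (fun y => dot3 (β y) (u y)) x - cross3 (curl3 u x) (β x)

end


/-!
Both operators are of first order, so at `x` the identity is linear algebra in the Jacobians
`Dβ` and `Du`. The product rule for the bilinear maps `·` and `×` gives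
`∇(β·u) = Dβᵀ u + Duᵀ β` and `curl (β × u) = β div u − u div β + Dβ u − Du β`, while
`(curl u) × β = Du β − Duᵀ β`. In the sum every derivative of `u` cancels.
-/

open Matrix

theorem LinearMap.fderiv_bilinear_apply {𝕜 E F G X : Type*}
    [NontriviallyNormedField 𝕜] [CompleteSpace 𝕜]
    [NormedAddCommGroup E] [NormedSpace 𝕜 E] [FiniteDimensional 𝕜 E]
    [NormedAddCommGroup F] [NormedSpace 𝕜 F] [FiniteDimensional 𝕜 F]
    [NormedAddCommGroup G] [NormedSpace 𝕜 G] [NormedAddCommGroup X] [NormedSpace 𝕜 X]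
    (B : E →ₗ[𝕜] F →ₗ[𝕜] G) {f : X → E} {g : X → F} {x : X}
    (hf : DifferentiableAt 𝕜 f x) (hg : DifferentiableAt 𝕜 g x) (v : X) :
    fderiv 𝕜 (fun y => B (f y) (g y)) x v =
      B (fderiv 𝕜 f x v) (g x) + B (f x) (fderiv 𝕜 g x v) := by
  change fderiv 𝕜 (fun y => B.toContinuousBilinearMap (f y) (g y)) x v = _
  rw [B.toContinuousBilinearMap.fderiv_of_bilinear hf hg]
  simp [add_comm]

theorem cross3_curl3 (u : V3 → V3) (x b : V3) :
    cross3 (curl3 u x) b = jac u x *ᵥ b - (jac u x)ᵀ *ᵥ b := by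
  funext i
  fin_cases i <;>
  · simp only [cross3, curl3, jac, mulVec, dotProduct, Fin.sum_univ_three, Fin.isValue,
      Fin.zero_eta, Fin.mk_one, Fin.reduceFinMk, cons_val_zero, cons_val_one, Matrix.cons_val,
      Pi.sub_apply, of_apply, transpose_apply]
    ring

section ProductRules

variable {β u : V3 → V3} {x : V3}

theorem grad3_dot3 (hβ : DifferentiableAt ℝ β x) (hu : DifferentiableAt ℝ u x) :
    grad3 (fun y => dot3 (β y) (u y)) x = (jac β x)ᵀ *ᵥ u x + (jac u x)ᵀ *ᵥ β x := by
  funext j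
  have hprod := (dotProductBilin ℝ ℝ : V3 →ₗ[ℝ] V3 →ₗ[ℝ] ℝ).fderiv_bilinear_apply hβ hu (e3 j)
  simp only [dotProductBilin_apply_apply] at hprod
  change fderiv ℝ (fun y => β y ⬝ᵥ u y) x (e3 j) = _
  rw [hprod]
  simp [jac, pd, mulVec, dotProduct, mul_comm]

theorem curl3_cross3 (hβ : DifferentiableAt ℝ β x) (hu : DifferentiableAt ℝ u x) :
    curl3 (fun y => cross3 (β y) (u y)) x =
      divg u x • β x - divg β x • u x + jac β x *ᵥ u x - jac u x *ᵥ β x := by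
  have hprod : ∀ i j, pd (fun y => cross3 (β y) (u y)) x i j =
      (fderiv ℝ β x (e3 j) ⨯₃ u x + β x ⨯₃ fderiv ℝ u x (e3 j)) i := fun i j =>
    congrFun ((crossProduct : V3 →ₗ[ℝ] V3 →ₗ[ℝ] V3).fderiv_bilinear_apply hβ hu (e3 j)) i
  funext i
  fin_cases i <;>
  · simp only [curl3, hprod]
    simp only [cross_apply, divg, pd, jac, mulVec, dotProduct, Fin.sum_univ_three,
      Fin.isValue, Fin.zero_eta, Fin.mk_one, Fin.reduceFinMk, cons_val_zero, cons_val_one,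
      Matrix.cons_val, Pi.add_apply, Pi.sub_apply, Pi.smul_apply, smul_eq_mul, of_apply]
    ring

end ProductRules

/-- **Symmetrization identity for the `H(curl)` advection operator** (identity
(5.2), curl case): for `u, β` differentiable at `x`,
`L^curl_β u + (L^curl_β)^* u = (Dβ + Dβᵀ) u − (div β) u` at `x`. -/
theorem curl_symmetrization_identity
    (u β : V3 → V3) (x : V3)
    (hu : DifferentiableAt ℝ u x) (hβ : DifferentiableAt ℝ β x) :
    Lcurl β u x + LcurlAdj β u x =
      (jac β x + (jac β x).transpose).mulVec (u x) - divg β x • u x := by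
  rw [Lcurl, LcurlAdj, grad3_dot3 hβ hu, cross3_curl3, curl3_cross3 hβ hu, add_mulVec]
  abel
end

section
/- Vanishing normal trace of the H(div) bubble functions: Let K ⊂ ℝ³ be a nondegenerate tetrahedron. Then every v ∈ B^{div}_r(K) has vanishing normal component on the boundary of K: for every j ∈ {0,1,2,3} and every x in the face F_j = {x ∈ K : λ_j(x) = 0}, v(x) · n_j = 0, where n_j is the unit outward normal to F_j. -/
open Finset

lemma dot3_smul_left (c : ℝ) (a b : V3) : dot3 (c • a) b = c * dot3 a b := by
  simp [dot3, Finset.mul_sum, mul_assoc]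

lemma dot3_smul_right (c : ℝ) (a b : V3) : dot3 a (c • b) = c * dot3 a b := by
  simp only [dot3, Finset.mul_sum, Pi.smul_apply, smul_eq_mul]
  exact Finset.sum_congr rfl fun i _ => by ring

lemma dot3_neg_right (a b : V3) : dot3 a (-b) = - dot3 a b := by
  simp [dot3]

lemma dot3_sum_left {ι} (s : Finset ι) (f : ι → V3) (b : V3) :
    dot3 (∑ i ∈ s, f i) b = ∑ i ∈ s, dot3 (f i) b := by
  simp only [dot3, Finset.sum_apply, Finset.sum_mul]
  rw [Finset.sum_comm]

lemma dot3_sub_left (a b g : V3) : dot3 (a - b) g = dot3 a g - dot3 b g := by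
  simp [dot3, sub_mul, Finset.sum_sub_distrib]

lemma dot3_comm (a b : V3) : dot3 a b = dot3 b a := by
  simp [dot3, mul_comm]

/-- **Vanishing normal trace of the `H(div)` bubble functions**: let `K` be a
nondegenerate tetrahedron with vertices `v₀,…,v₃`, barycentric coordinate
functions `λ₀,…,λ₃` (affine with `λᵢ(vⱼ) = δᵢⱼ`), unit outward normals
`nᵢ = −∇λᵢ/|∇λᵢ|` to the faces `Fᵢ = {x ∈ K : λᵢ(x) = 0}`, and unit edge
tangents `t₀ᵢ = (vᵢ − v₀)/|vᵢ − v₀|`. Then every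
`v = ∑ᵢ pᵢ bᵢ^div ∈ B^div_r(K)`, with `bᵢ^div = λ₀λᵢ t₀ᵢ` for `i = 1,2,3` and
`pᵢ ∈ P_{r−1}(K)`, satisfies `v(x) · nⱼ = 0` for every `j ∈ {0,1,2,3}` and
every `x` in the face `Fⱼ`. -/
theorem div_bubble_vanishing_normal_trace
    (r : ℕ) (hr : 1 ≤ r)
    (v : Fin 4 → V3) (hv : AffineIndependent ℝ v)
    (lam : Fin 4 → V3 → ℝ)
    (hdelta : ∀ i j, lam i (v j) = if i = j then (1 : ℝ) else 0)
    (n : Fin 4 → V3)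
    (hn : ∀ i, ∃ (g : V3) (c : ℝ),
      (∀ x, lam i x = dot3 g x + c) ∧ n i = (norm3 g)⁻¹ • (-g))
    (p : Fin 3 → MvPolynomial (Fin 3) ℝ) (hp : ∀ i, (p i).totalDegree ≤ r - 1)
    (j : Fin 4) (x : V3)
    (hxK : x ∈ convexHull ℝ (Set.range v)) (hxj : lam j x = 0) :
    dot3
      (∑ i, MvPolynomial.eval x (p i) •
        ((lam 0 x * lam i.succ x) •
          ((norm3 (v i.succ - v 0))⁻¹ • (v i.succ - v 0))))
      (n j) = 0 := by
  rw [dot3_sum_left]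
  apply Finset.sum_eq_zero
  intro i _
  rw [dot3_smul_left, dot3_smul_left, dot3_smul_left]
  by_cases h0 : j = 0
  · subst h0
    rw [hxj]
    simp
  · by_cases hi : i.succ = j
    · rw [hi, hxj]
      simp
    · obtain ⟨g, c, hg, hnj⟩ := hn j
      have h1 : dot3 g (v 0) + c = 0 := by
        rw [← hg, hdelta j 0, if_neg h0]
      have h2 : dot3 g (v i.succ) + c = 0 := by
        rw [← hg, hdelta j i.succ, if_neg (fun h => hi h.symm)]
      have hsub : dot3 (v i.succ - v 0) g = 0 := by
        rw [dot3_sub_left, dot3_comm (v i.succ) g, dot3_comm (v 0) g]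
        linarith
      rw [hnj, dot3_smul_right, dot3_neg_right, hsub]
      ring
end
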